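/- Let τ ∈ S_d be non-monotone with d ≥ 3. Then the open interval (i(τ), τ) in the consecutive pattern poset contains exactly two elements, namely the distinct standardizations st(τ(1)…τ(d−1)) and st(τ(2)…τ(d)). -/

import Mathlib

/-- Standardization of a list of distinct naturals: replace each entry by its rank
(the number of entries less than or equal to it). -/
def stdize (s : List ℕ) : List ℕ := s.map (fun x => (s.filter (· ≤ x)).length)

/-- All contiguous subwords (infixes) of a list. -/
def infixes (l : List ℕ) : List (List ℕ) := l.inits.flatMap List.tails

/-- `l` is a permutation of `{1,…,d}` where `d = l.length ≥ 1`; these are the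
elements of the consecutive pattern poset. -/
def IsPermList (l : List ℕ) : Prop := l ≠ [] ∧ l.Perm (List.range' 1 l.length)

/-- Consecutive pattern containment: `σ ≤ τ` iff `σ` is the standardization of
some contiguous subsequence of `τ`. -/
def PattLE (σ τ : List ℕ) : Prop := σ ∈ (infixes τ).map stdize

instance (σ τ : List ℕ) : Decidable (PattLE σ τ) :=
  inferInstanceAs (Decidable (σ ∈ (infixes τ).map stdize))

/-- A permutation is monotone if its letters strictly increase or strictly decrease. -/
def MonotoneList (l : List ℕ) : Prop := l.Chain' (· < ·) ∨ l.Chain' (· > ·)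

/-- The interior `i(τ)`: standardization of `τ` with first and last letters removed. -/
def pattInterior (τ : List ℕ) : List ℕ := stdize τ.tail.dropLast

/-- Length of the longest proper prefix of `τ` whose standardization is also the
standardization of a suffix of `τ`. -/
def extLen (τ : List ℕ) : ℕ :=
  Nat.findGreatest (fun k => stdize (τ.take k) = stdize (τ.drop (τ.length - k))) (τ.length - 1)

/-- The exterior `x(τ)`: the longest permutation that is both a proper prefix and a
suffix of `τ`. -/
def pattExterior (τ : List ℕ) : List ℕ := stdize (τ.take (extLen τ))

/-- The closed interval `[σ,τ]` in the consecutive pattern poset, as a `Finset`. -/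
def pattInterval (σ τ : List ℕ) : Finset (List ℕ) :=
  ((infixes τ).map stdize).toFinset.filter (fun z => PattLE σ z)

/-- The open interval `(σ,τ)` in the consecutive pattern poset, as a `Finset`. -/
def openPattInterval (σ τ : List ℕ) : Finset (List ℕ) :=
  ((infixes τ).map stdize).toFinset.filter (fun z => PattLE σ z ∧ z ≠ σ ∧ z ≠ τ)

/-- `τ` covers `σ` in the consecutive pattern poset: `σ < τ` and no element lies
strictly between them. -/
def CoveredBy (σ τ : List ℕ) : Prop :=
  PattLE σ τ ∧ σ ≠ τ ∧ ¬ ∃ ρ, IsPermList ρ ∧ PattLE σ ρ ∧ PattLE ρ τ ∧ ρ ≠ σ ∧ ρ ≠ τ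

/-- `c` is a maximal chain of the interval `[σ,τ]`: it starts at `τ`, ends at `σ`,
and each element covers the next. -/
def IsMaxChainPatt (σ τ : List ℕ) (c : List (List ℕ)) : Prop :=
  c.head? = some τ ∧ c.getLast? = some σ ∧ c.Chain' (fun a b => CoveredBy b a)


/-!
Deleting the first or last letter of `τ` gives patterns of length `d - 1` that contain `i(τ)`,
and these are the only infixes of length `d - 1`. Patterns of equal length are comparable only
when equal, so an element strictly between `i(τ)` (length `d - 2`) and `τ` (length `d`) has
length `d - 1`. The two patterns differ because `st(τ(1)…τ(d-1)) = st(τ(2)…τ(d))` says that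
`τ(i) < τ(i+1) ↔ τ(i+1) < τ(i+2)` for all `i`, which forces `τ` to be monotone.
-/

def stdRank (l : List ℕ) (x : ℕ) : ℕ := (l.filter (· ≤ x)).length

lemma stdize_eq_map_stdRank (l : List ℕ) : stdize l = l.map (stdRank l) := rfl

@[simp]
lemma length_stdize (l : List ℕ) : (stdize l).length = l.length := by
  simp [stdize]

section stdRank

variable {l : List ℕ} {x y : ℕ}

lemma stdRank_mono (l : List ℕ) (h : x ≤ y) : stdRank l x ≤ stdRank l y :=
  (l.monotone_filter_right fun z hz => by simpa using (of_decide_eq_true hz).trans h).length_le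

lemma stdRank_lt_stdRank (hy : y ∈ l) (h : x < y) : stdRank l x < stdRank l y := by
  have hsub := l.monotone_filter_right (p := (· ≤ x)) (q := (· ≤ y))
    fun z hz => by simpa using (of_decide_eq_true hz).trans h.le
  refine lt_of_le_of_ne hsub.length_le fun hlen => ?_
  have hy' : y ∈ l.filter (· ≤ y) := by simp [hy]
  rw [← hsub.eq_of_length hlen] at hy'
  simp only [List.mem_filter, decide_eq_true_eq] at hy'
  omega

lemma stdRank_lt_stdRank_iff (hy : y ∈ l) :
    stdRank l x < stdRank l y ↔ x < y :=
  ⟨fun h => not_le.1 fun hyx => (stdRank_mono l hyx).not_gt h, stdRank_lt_stdRank hy⟩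

lemma stdRank_le_stdRank_iff (hx : x ∈ l) : stdRank l x ≤ stdRank l y ↔ x ≤ y := by
  simpa only [not_lt] using (stdRank_lt_stdRank_iff hx).not

end stdRank

lemma countP_le_range' {x n : ℕ} (hx : x ≤ n) : (List.range' 1 n).countP (· ≤ x) = x := by
  have hsplit : List.range' 1 n = List.range' 1 x ++ List.range' (1 + x) (n - x) := by
    rw [List.range'_append_1, Nat.add_sub_cancel' hx]
  rw [hsplit, List.countP_append, List.countP_eq_length.2, List.countP_eq_zero.2,
    List.length_range', Nat.add_zero] <;>
  · intro a ha
    simp only [List.mem_range'_1, decide_eq_true_eq] at ha ⊢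
    omega

lemma stdize_eq_self_of_perm_range' {l : List ℕ} (h : l.Perm (List.range' 1 l.length)) :
    stdize l = l := by
  refine (List.map_congr_left fun x hx => ?_).trans l.map_id
  have hxr := List.mem_range'_1.1 (h.subset hx)
  show stdRank l x = x
  rw [stdRank, ← List.countP_eq_length_filter, h.countP_eq, countP_le_range' (by omega)]

lemma stdize_map_of_le_iff {v : List ℕ} {f : ℕ → ℕ}
    (hf : ∀ x ∈ v, ∀ y ∈ v, f x ≤ f y ↔ x ≤ y) :
    stdize (v.map f) = stdize v := by
  simp only [stdize_eq_map_stdRank, List.map_map]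
  refine List.map_congr_left fun x hx => ?_
  simp only [Function.comp_apply, stdRank, ← List.countP_eq_length_filter, List.countP_map]
  exact List.countP_congr fun z hz => by simpa using hf z hz x hx

@[simp]
lemma stdize_stdize (l : List ℕ) : stdize (stdize l) = stdize l :=
  stdize_map_of_le_iff fun _ hx _ _ => stdRank_le_stdRank_iff hx

lemma getElem_stdize_lt_getElem_stdize_iff {u : List ℕ} {i j : ℕ}
    (hi : i < (stdize u).length) (hj : j < (stdize u).length) :
    (stdize u)[i] < (stdize u)[j] ↔ u[i]'(by simpa using hi) < u[j]'(by simpa using hj) := by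
  simp only [stdize_eq_map_stdRank, List.getElem_map]
  exact stdRank_lt_stdRank_iff (List.getElem_mem _)

lemma mem_infixes {w l : List ℕ} : w ∈ infixes l ↔ w <:+: l := by
  simp only [infixes, List.mem_flatMap, List.mem_inits, List.mem_tails]
  constructor
  · rintro ⟨p, hp, hw⟩
    exact hw.isInfix.trans hp.isInfix
  · rintro ⟨s, t, rfl⟩
    exact ⟨s ++ w, ⟨t, rfl⟩, ⟨s, rfl⟩⟩

lemma pattLE_iff {σ τ : List ℕ} : PattLE σ τ ↔ ∃ w, w <:+: τ ∧ stdize w = σ := by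
  simp only [PattLE, List.mem_map, mem_infixes]

lemma pattLE_stdize_of_infix {v l : List ℕ} (hv : v <:+: l) : PattLE (stdize v) (stdize l) :=
  pattLE_iff.2 ⟨v.map (stdRank l), hv.map _,
    stdize_map_of_le_iff fun _ hx _ _ => stdRank_le_stdRank_iff (hv.subset hx)⟩

lemma PattLE.length_le {σ τ : List ℕ} (h : PattLE σ τ) : σ.length ≤ τ.length := by
  obtain ⟨w, hw, rfl⟩ := pattLE_iff.1 h
  simpa using hw.length_le

lemma PattLE.eq_stdize_of_length_le {σ τ : List ℕ} (h : PattLE σ τ)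
    (hlen : τ.length ≤ σ.length) : σ = stdize τ := by
  obtain ⟨w, hw, rfl⟩ := pattLE_iff.1 h
  rw [hw.eq_of_length (le_antisymm hw.length_le (by simpa using hlen))]

lemma mem_openPattInterval_iff {σ τ z : List ℕ} (hτ : stdize τ = τ) :
    z ∈ openPattInterval σ τ ↔
      ∃ w, w <:+: τ ∧ stdize w = z ∧ PattLE σ z ∧ σ.length < w.length ∧ w.length < τ.length := by
  simp only [openPattInterval, Finset.mem_filter, List.mem_toFinset, List.mem_map, mem_infixes]
  constructor
  · rintro ⟨⟨w, hw, rfl⟩, hσ, hne_σ, hne_τ⟩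
    have hσw : σ.length < w.length := by
      refine lt_of_le_of_ne (by simpa using hσ.length_le) fun hlen => hne_σ ?_
      rw [hσ.eq_stdize_of_length_le (by simp [hlen]), stdize_stdize]
    refine ⟨w, hw, rfl, hσ, hσw, lt_of_le_of_ne hw.length_le fun hlen => hne_τ ?_⟩
    rw [hw.eq_of_length hlen, hτ]
  · rintro ⟨w, hw, rfl, hσ, hσw, hwτ⟩
    refine ⟨⟨w, hw, rfl⟩, hσ, fun h => ?_, fun h => ?_⟩
    · exact hσw.ne (by rw [← h, length_stdize])
    · exact hwτ.ne (by rw [← h, length_stdize])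

lemma List.IsInfix.eq_dropLast_or_eq_tail {w l : List ℕ} (h : w <:+: l)
    (hlen : w.length + 1 = l.length) : w = l.dropLast ∨ w = l.tail := by
  obtain ⟨s, t, rfl⟩ := h
  rcases s with _ | ⟨_, _ | _⟩ <;> rcases t with _ | ⟨_, _ | _⟩ <;>
    simp at hlen ⊢ <;> omega

lemma monotoneList_of_lt_iff_lt {l : List ℕ} (hnd : l.Nodup)
    (h : ∀ i (hi : i + 2 < l.length), l[i] < l[i + 1] ↔ l[i + 1] < l[i + 2]) :
    MonotoneList l := by
  show List.IsChain _ l ∨ List.IsChain _ l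
  simp only [List.isChain_iff_getElem]
  rcases Nat.lt_or_ge l.length 2 with hl | hl
  · exact Or.inl fun i hi => by omega
  have hsame : ∀ i (hi : i + 1 < l.length), l[i] < l[i + 1] ↔ l[0] < l[1] := by
    intro i hi
    induction i with
    | zero => rfl
    | succ j ih => exact (h j (by omega)).symm.trans (ih (by omega))
  by_cases h01 : l[0] < l[1]
  · exact Or.inl fun i hi => (hsame i hi).2 h01
  · refine Or.inr fun i hi => lt_of_le_of_ne (not_lt.1 (mt (hsame i hi).1 h01)) fun he => ?_
    simp [hnd.getElem_inj_iff] at he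

lemma monotoneList_of_stdize_dropLast_eq_stdize_tail {τ : List ℕ} (hnd : τ.Nodup)
    (h : stdize τ.dropLast = stdize τ.tail) : MonotoneList τ := by
  refine monotoneList_of_lt_iff_lt hnd fun i hi => ?_
  have hd : i + 1 < (stdize τ.dropLast).length := by
    simp only [length_stdize, List.length_dropLast]; omega
  have ht : i + 1 < (stdize τ.tail).length := by
    simp only [length_stdize, List.length_tail]; omega
  have hdl := getElem_stdize_lt_getElem_stdize_iff (i := i) (j := i + 1) (by omega) hd
  have htl := getElem_stdize_lt_getElem_stdize_iff (i := i) (j := i + 1) (by omega) ht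
  simp only [List.getElem_dropLast, List.getElem_tail] at hdl htl
  rw [← hdl, ← htl]
  simp only [h]

/-- For a non-monotone `τ` of length at least 3, the open interval `(i(τ), τ)`
contains exactly two elements, namely the distinct standardizations of
`τ(1)…τ(d−1)` and `τ(2)…τ(d)`. -/
theorem open_interval_interior (τ : List ℕ) (hτ : IsPermList τ) (h3 : 3 ≤ τ.length)
    (hm : ¬ MonotoneList τ) :
    stdize τ.dropLast ≠ stdize τ.tail ∧
    openPattInterval (pattInterior τ) τ = {stdize τ.dropLast, stdize τ.tail} := by
  have hnd : τ.Nodup := hτ.2.nodup_iff.2 List.nodup_range'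
  refine ⟨fun h => hm (monotoneList_of_stdize_dropLast_eq_stdize_tail hnd h), ?_⟩
  have hint : (pattInterior τ).length = τ.length - 2 := by
    simp only [pattInterior, length_stdize, List.length_dropLast, List.length_tail]; omega
  ext z
  rw [mem_openPattInterval_iff (stdize_eq_self_of_perm_range' hτ.2), Finset.mem_insert,
    Finset.mem_singleton]
  constructor
  · rintro ⟨w, hw, rfl, -, hlo, hhi⟩
    rcases hw.eq_dropLast_or_eq_tail (by omega) with rfl | rfl
    exacts [Or.inl rfl, Or.inr rfl]
  · rintro (rfl | rfl)
    · refine ⟨_, τ.dropLast_prefix.isInfix, rfl, ?_,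
        by simp only [hint, List.length_dropLast]; omega, by simp only [List.length_dropLast]; omega⟩
      rw [pattInterior, ← List.tail_dropLast]
      exact pattLE_stdize_of_infix τ.dropLast.tail_suffix.isInfix
    · exact ⟨_, τ.tail_suffix.isInfix, rfl,
        pattLE_stdize_of_infix τ.tail.dropLast_prefix.isInfix,
        by simp only [hint, List.length_tail]; omega, by simp only [List.length_tail]; omega⟩
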